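/- (Lemma 4: properties of the adaptive sampling intervals.) Let ξ be a DoS sequence satisfying Assumption 1, let B̂_d, B̂_f be generated by the DoS estimator with parameters ℓ ≥ 2, ε₀ ∈ (0,1), θ ∈ (0,1), let Δ₀ > 0 and γ₁ > 1, and define sampling instants by t₁ = 0, t_{k+1} = t_k + Δ_k, where Δ_k = Δ₀ if t_k ∈ [0, h₁+τ₁), and Δ_k = min{Δ₀, (1 − B̂_d(h_n+τ_n))/(γ₁·B̂_f(h_n))} if t_k ∈ [h_n+τ_n, h_{n+1}+τ_{n+1}). Then there exist Δ̲ > 0, a finite ť ≥ 0, Δ̄ ∈ (0, Δ₀], a duration-bound B_d ∈ D(ξ) and a frequency-bound B_f ∈ F(ξ) such that: (i) Δ̲ ≤ Δ_k ≤ Δ₀ for all k; (ii) Δ_k ≤ Δ̄ whenever t_k ≥ ť; and (iii) B_d + B_f·Δ̄ < 1. -/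
import Mathlib


open MeasureTheory Filter Set

/-- The union of all DoS intervals `[h n, h n + τ n)`, `n ≥ 1`. -/
def DoSUnion (h τ : ℕ → ℝ) : Set ℝ :=
  ⋃ n ∈ Set.Ici (1 : ℕ), Set.Ico (h n) (h n + τ n)

/-- `|Ξ(0,t)|`: the Lebesgue measure of the part of `[0,t]` under DoS attack. -/
noncomputable def xiMeas (h τ : ℕ → ℝ) (t : ℝ) : ℝ :=
  (volume (DoSUnion h τ ∩ Set.Icc 0 t)).toReal

/-- `n_ξ(0,t)`: the number of DoS off-to-on transitions `h n` lying in `[0,t]`. -/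
noncomputable def nXi (h : ℕ → ℝ) (t : ℝ) : ℕ :=
  Set.ncard ({x : ℝ | ∃ n : ℕ, 1 ≤ n ∧ h n = x} ∩ Set.Icc 0 t)

/-- `ξ = (h, τ)` is a DoS sequence. -/
def IsDoS (h τ : ℕ → ℝ) : Prop :=
  0 ≤ h 1 ∧ (∀ n, 1 ≤ n → 0 ≤ τ n) ∧ (∀ n, 1 ≤ n → h n + τ n < h (n + 1))

/-- `B` is a duration-bound of `ξ`. -/
def IsDurationBound (h τ : ℕ → ℝ) (B : ℝ) : Prop :=
  0 ≤ B ∧ B ≤ 1 ∧ ∃ κ > (0 : ℝ), ∀ t ≥ (0 : ℝ), xiMeas h τ t ≤ κ + B * t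

/-- `D(ξ)`: the set of duration-bounds of `ξ`. -/
def durBounds (h τ : ℕ → ℝ) : Set ℝ := {B | IsDurationBound h τ B}

/-- `B` is a (finite) frequency-bound of `ξ`. -/
def IsFreqBound (h : ℕ → ℝ) (B : ℝ) : Prop :=
  0 ≤ B ∧ ∃ Λ > (0 : ℝ), ∀ t ≥ (0 : ℝ), (nXi h t : ℝ) ≤ Λ + B * t

/-- `F(ξ)`: the set of finite frequency-bounds of `ξ`. -/
def freqBounds (h : ℕ → ℝ) : Set ℝ := {B | IsFreqBound h B}

/-- Assumption 1: `ξ` is not an edge case. -/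
def Assumption1 (h τ : ℕ → ℝ) : Prop :=
  sInf (durBounds h τ) < 1 ∧ (freqBounds h).Nonempty ∧
    ∃ Γ > (0 : ℝ), ∀ n, 1 ≤ n → τ n ≤ Γ

/-- `Bd` is the duration estimator generated by (8). -/
def IsDurEstimator (h τ : ℕ → ℝ) (l : ℕ) (ε₀ θ : ℝ) (Bd : ℝ → ℝ) : Prop :=
  (∀ t, 0 ≤ t → t < h l + τ l → Bd t = ε₀) ∧
  ∀ n, ∀ hn : l ≤ n, ∀ t, h n + τ n ≤ t → t < h (n + 1) + τ (n + 1) →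
    Bd t = (Finset.Icc l n).sup' (Finset.nonempty_Icc.mpr hn)
      (fun i => max ε₀ (θ * (xiMeas h τ (h i + τ i) / (h i + τ i)) + (1 - θ)))

/-- `Bf` is the frequency estimator generated by (9). -/
def IsFreqEstimator (h : ℕ → ℝ) (l : ℕ) (ε₀ θ : ℝ) (Bf : ℝ → ℝ) : Prop :=
  (∀ t, 0 ≤ t → t < h l → Bf t = ε₀) ∧
  ∀ n, ∀ hn : l ≤ n, ∀ t, h n ≤ t → t < h (n + 1) →
    Bf t = (Finset.Icc l n).sup' (Finset.nonempty_Icc.mpr hn)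
      (fun i => max ε₀ (((i : ℝ) / h i) / θ))


section Aux

variable {h τ : ℕ → ℝ}

lemma T_lt_h (hξ : IsDoS h τ) : ∀ m n, 1 ≤ m → m < n → h m + τ m < h n := by
  intro m n h1 hmn
  induction n with
  | zero => omega
  | succ k ih =>
    rcases Nat.lt_succ_iff_lt_or_eq.mp hmn with hlt | heq
    · have hk : 1 ≤ k := le_trans h1 (Nat.le_of_lt hlt)
      calc h m + τ m < h k := ih hlt
        _ ≤ h k + τ k := le_add_of_nonneg_right (hξ.2.1 k hk)
        _ < h (k + 1) := hξ.2.2 k hk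
    · subst heq; exact hξ.2.2 m h1

lemma h_lt (hξ : IsDoS h τ) : ∀ m n, 1 ≤ m → m < n → h m < h n := fun m n h1 hmn =>
  lt_of_le_of_lt (le_add_of_nonneg_right (hξ.2.1 m h1)) (T_lt_h hξ m n h1 hmn)

lemma h_le (hξ : IsDoS h τ) : ∀ m n, 1 ≤ m → m ≤ n → h m ≤ h n := by
  intro m n h1 hmn
  rcases eq_or_lt_of_le hmn with rfl | hlt
  · exact le_rfl
  · exact (h_lt hξ m n h1 hlt).le

lemma T_lt (hξ : IsDoS h τ) : ∀ m n, 1 ≤ m → m < n → h m + τ m < h n + τ n :=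
  fun m n h1 hmn => lt_of_lt_of_le (T_lt_h hξ m n h1 hmn)
    (le_add_of_nonneg_right (hξ.2.1 n (le_trans h1 (Nat.le_of_lt hmn))))

lemma T_le (hξ : IsDoS h τ) : ∀ m n, 1 ≤ m → m ≤ n → h m + τ m ≤ h n + τ n := by
  intro m n h1 hmn
  rcases eq_or_lt_of_le hmn with rfl | hlt
  · exact le_rfl
  · exact (T_lt hξ m n h1 hlt).le

lemma h_nonneg (hξ : IsDoS h τ) : ∀ n, 1 ≤ n → 0 ≤ h n :=
  fun n hn => le_trans hξ.1 (h_le hξ 1 n le_rfl hn)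

lemma T_nonneg (hξ : IsDoS h τ) : ∀ n, 1 ≤ n → 0 ≤ h n + τ n :=
  fun n hn => le_trans (h_nonneg hξ n hn) (le_add_of_nonneg_right (hξ.2.1 n hn))

lemma h_pos (hξ : IsDoS h τ) : ∀ n, 2 ≤ n → 0 < h n := by
  intro n hn
  have h1 : h 1 + τ 1 < h 2 := hξ.2.2 1 le_rfl
  have h2 : 0 ≤ h 1 + τ 1 := T_nonneg hξ 1 le_rfl
  exact lt_of_lt_of_le (lt_of_le_of_lt h2 h1) (h_le hξ 2 n one_le_two hn)

lemma T_pos (hξ : IsDoS h τ) : ∀ n, 2 ≤ n → 0 < h n + τ n :=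
  fun n hn => lt_of_lt_of_le (h_pos hξ n hn)
    (le_add_of_nonneg_right (hξ.2.1 n (le_trans one_le_two hn)))

lemma xi_vol_ne_top (h τ : ℕ → ℝ) (t : ℝ) : volume (DoSUnion h τ ∩ Set.Icc 0 t) ≠ ⊤ := by
  have h1 : volume (DoSUnion h τ ∩ Set.Icc 0 t) ≤ volume (Set.Icc (0:ℝ) t) :=
    measure_mono Set.inter_subset_right
  refine ne_top_of_le_ne_top ?_ h1
  rw [Real.volume_Icc]
  exact ENNReal.ofReal_ne_top

lemma xiMeas_nonneg' (h τ : ℕ → ℝ) (t : ℝ) : 0 ≤ xiMeas h τ t := ENNReal.toReal_nonneg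

lemma xiMeas_mono (h τ : ℕ → ℝ) {s t : ℝ} (hst : s ≤ t) : xiMeas h τ s ≤ xiMeas h τ t :=
  ENNReal.toReal_mono (xi_vol_ne_top h τ t)
    (measure_mono (Set.inter_subset_inter_right _ (Set.Icc_subset_Icc_right hst)))

lemma xiMeas_le_self (h τ : ℕ → ℝ) {t : ℝ} (ht : 0 ≤ t) : xiMeas h τ t ≤ t := by
  have h1 : volume (DoSUnion h τ ∩ Set.Icc 0 t) ≤ volume (Set.Icc (0:ℝ) t) :=
    measure_mono Set.inter_subset_right
  have h2 := ENNReal.toReal_mono (by rw [Real.volume_Icc]; exact ENNReal.ofReal_ne_top) h1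
  rw [Real.volume_Icc, ENNReal.toReal_ofReal (by linarith)] at h2
  calc xiMeas h τ t ≤ t - 0 := h2
    _ = t := by ring

lemma xiMeas_window (hξ : IsDoS h τ) (n : ℕ) (hn : 1 ≤ n) (t : ℝ)
    (ht : t ≤ h (n + 1) + τ (n + 1)) :
    xiMeas h τ t ≤ xiMeas h τ (h n + τ n) + τ (n + 1) := by
  have hsub : DoSUnion h τ ∩ Set.Icc 0 t ⊆
      (DoSUnion h τ ∩ Set.Icc 0 (h n + τ n)) ∪ Set.Ico (h (n+1)) (h (n+1) + τ (n+1)) := by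
    rintro x ⟨hxU, hx0, hxt⟩
    rcases le_or_gt x (h n + τ n) with hc | hc
    · exact Or.inl ⟨hxU, hx0, hc⟩
    · right
      obtain ⟨m, hm2, hm1, hm3⟩ : ∃ m, h m ≤ x ∧ 1 ≤ m ∧ x < h m + τ m := by
        simpa [DoSUnion, Set.mem_iUnion] using hxU
      have hxm : x ∈ Set.Ico (h m) (h m + τ m) := ⟨hm2, hm3⟩
      have hm : m = n + 1 := by
        by_contra hne
        rcases lt_or_gt_of_ne hne with hlt | hgt
        · have hmn : m ≤ n := by omega
          have := T_le hξ m n hm1 hmn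
          exact absurd (lt_of_lt_of_le hxm.2 this) (not_lt.mpr hc.le)
        · have : h (n + 1) + τ (n + 1) < h m := T_lt_h hξ (n+1) m (by omega) hgt
          have hxm1 := hxm.1
          linarith
      subst hm
      exact hxm
  have hmeas : volume (DoSUnion h τ ∩ Set.Icc 0 t) ≤
      volume (DoSUnion h τ ∩ Set.Icc 0 (h n + τ n)) +
        volume (Set.Ico (h (n+1)) (h (n+1) + τ (n+1))) :=
    le_trans (measure_mono hsub) (measure_union_le _ _)
  have hIco : volume (Set.Ico (h (n+1)) (h (n+1) + τ (n+1))) = ENNReal.ofReal (τ (n+1)) := by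
    rw [Real.volume_Ico]; ring_nf
  have hne1 : volume (DoSUnion h τ ∩ Set.Icc 0 (h n + τ n)) ≠ ⊤ := xi_vol_ne_top h τ _
  have hne2 : volume (Set.Ico (h (n+1)) (h (n+1) + τ (n+1))) ≠ ⊤ := by
    rw [hIco]; exact ENNReal.ofReal_ne_top
  have := ENNReal.toReal_mono (by simp [ENNReal.add_ne_top, hne1, hne2]) hmeas
  rw [ENNReal.toReal_add hne1 hne2, hIco,
    ENNReal.toReal_ofReal (hξ.2.1 (n+1) (by omega))] at this
  exact this

lemma nXi_at (hξ : IsDoS h τ) (N : ℕ) (hN : 1 ≤ N) : nXi h (h N) = N := by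
  have hset : {x : ℝ | ∃ n : ℕ, 1 ≤ n ∧ h n = x} ∩ Set.Icc 0 (h N) = h '' Set.Icc 1 N := by
    ext x
    constructor
    · rintro ⟨⟨m, hm1, rfl⟩, _, hxN⟩
      refine ⟨m, ⟨hm1, ?_⟩, rfl⟩
      by_contra hc
      exact absurd hxN (not_le.mpr (h_lt hξ N m hN (by omega)))
    · rintro ⟨m, ⟨hm1, hmN⟩, rfl⟩
      exact ⟨⟨m, hm1, rfl⟩, h_nonneg hξ m hm1, h_le hξ m N hm1 hmN⟩
  rw [nXi, hset, Set.ncard_image_of_injOn, ← Finset.coe_Icc, Set.ncard_coe_finset,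
    Nat.card_Icc]
  · omega
  · intro a ha b hb hab
    by_contra hne
    rcases lt_or_gt_of_ne hne with hlt | hgt
    · exact absurd hab (ne_of_lt (h_lt hξ a b ha.1 hlt))
    · exact absurd hab.symm (ne_of_lt (h_lt hξ b a hb.1 hgt))

lemma nXi_le (hξ : IsDoS h τ) (n : ℕ) (hn : 1 ≤ n) (t : ℝ) (ht : t < h (n + 1)) :
    nXi h t ≤ n := by
  have hsub : {x : ℝ | ∃ m : ℕ, 1 ≤ m ∧ h m = x} ∩ Set.Icc 0 t ⊆ h '' Set.Icc 1 n := by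
    rintro x ⟨⟨m, hm1, rfl⟩, _, hxt⟩
    refine ⟨m, ⟨hm1, ?_⟩, rfl⟩
    by_contra hc
    have : h (n + 1) ≤ h m := h_le hξ (n+1) m (by omega) (by omega)
    linarith
  calc nXi h t ≤ (h '' Set.Icc 1 n).ncard :=
        Set.ncard_le_ncard hsub ((Set.finite_Icc _ _).image _)
    _ ≤ (Set.Icc 1 n).ncard := Set.ncard_image_le (Set.finite_Icc _ _)
    _ = n := by rw [← Finset.coe_Icc, Set.ncard_coe_finset, Nat.card_Icc]; omega

lemma h_unbounded (hξ : IsDoS h τ) {F₀ Λ₀ : ℝ} (hF0 : 0 ≤ F₀)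
    (hb : ∀ t ≥ (0:ℝ), (nXi h t : ℝ) ≤ Λ₀ + F₀ * t) :
    ∀ M : ℝ, ∃ n, 1 ≤ n ∧ M < h n := by
  intro M
  by_contra hc
  push_neg at hc
  have hM0 : 0 ≤ M := le_trans hξ.1 (hc 1 le_rfl)
  set N := ⌈Λ₀ + F₀ * M⌉₊ + 1 with hNdef
  have hN1 : 1 ≤ N := by omega
  have h1 : (nXi h (h N) : ℝ) ≤ Λ₀ + F₀ * h N := hb (h N) (h_nonneg hξ N hN1)
  rw [nXi_at hξ N hN1] at h1
  have h2 : Λ₀ + F₀ * h N ≤ Λ₀ + F₀ * M := by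
    have := hc N hN1
    nlinarith
  have h3 : Λ₀ + F₀ * M ≤ (⌈Λ₀ + F₀ * M⌉₊ : ℝ) := Nat.le_ceil _
  have h4 : (N : ℝ) = (⌈Λ₀ + F₀ * M⌉₊ : ℝ) + 1 := by rw [hNdef]; push_cast; ring
  linarith

lemma exists_window (g : ℕ → ℝ) (hmono : ∀ m n, 1 ≤ m → m < n → g m < g n)
    (hub : ∀ M : ℝ, ∃ n, 1 ≤ n ∧ M < g n) (t : ℝ) (ht : g 1 ≤ t) :
    ∃ n, 1 ≤ n ∧ g n ≤ t ∧ t < g (n + 1) := by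
  classical
  have hex : ∃ m, 1 ≤ m ∧ t < g m := hub t
  set m₀ := Nat.find hex with hm₀def
  obtain ⟨hm₀1, hm₀t⟩ := Nat.find_spec hex
  have hne1 : m₀ ≠ 1 := by
    intro hc
    have : t < g 1 := by rw [← hc]; exact hm₀t
    linarith
  have h2 : 2 ≤ m₀ := by omega
  refine ⟨m₀ - 1, by omega, ?_, ?_⟩
  · have hmin := Nat.find_min hex (m := m₀ - 1) (by omega)
    rcases not_and_or.mp hmin with hA | hB
    · omega
    · exact not_lt.mp hB
  · have : m₀ - 1 + 1 = m₀ := by omega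
    rw [this]
    exact hm₀t

end Aux

set_option maxHeartbeats 2000000 in
/-- Lemma 4: the adaptive sampling intervals generated by (14)–(15) are bounded
below by some `Δ̲ > 0`, and after a finite time `ť` they are bounded above by
some `Δ̄` for which `B_d + B_f Δ̄ < 1` holds with suitable duration- and
frequency-bounds of `ξ`. -/
theorem adaptive_sampling_intervals (h τ : ℕ → ℝ) (hξ : IsDoS h τ)
    (hA1 : Assumption1 h τ) (l : ℕ) (hl : 2 ≤ l) (ε₀ θ : ℝ)
    (hε₀ : 0 < ε₀ ∧ ε₀ < 1) (hθ : 0 < θ ∧ θ < 1) (Bd Bf : ℝ → ℝ)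
    (hBd : IsDurEstimator h τ l ε₀ θ Bd) (hBf : IsFreqEstimator h l ε₀ θ Bf)
    (Δ₀ : ℝ) (hΔ₀ : 0 < Δ₀) (γ₁ : ℝ) (hγ₁ : 1 < γ₁)
    (tk Δ : ℕ → ℝ) (ht1 : tk 1 = 0)
    (hrec : ∀ k, 1 ≤ k → tk (k + 1) = tk k + Δ k)
    (hinit : ∀ k, 1 ≤ k → 0 ≤ tk k → tk k < h 1 + τ 1 → Δ k = Δ₀)
    (hupd : ∀ k, 1 ≤ k → ∀ n, 1 ≤ n → h n + τ n ≤ tk k →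
      tk k < h (n + 1) + τ (n + 1) →
      Δ k = min Δ₀ ((1 - Bd (h n + τ n)) / (γ₁ * Bf (h n)))) :
    ∃ Δlow > (0 : ℝ), ∃ tcheck ≥ (0 : ℝ), ∃ Δbar : ℝ, 0 < Δbar ∧ Δbar ≤ Δ₀ ∧
      ∃ B_d ∈ durBounds h τ, ∃ B_f ∈ freqBounds h,
        (∀ k, 1 ≤ k → Δlow ≤ Δ k ∧ Δ k ≤ Δ₀) ∧
        (∀ k, 1 ≤ k → tcheck ≤ tk k → Δ k ≤ Δbar) ∧
        B_d + B_f * Δbar < 1 := by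
  classical
  obtain ⟨hε₀0, hε₀1⟩ := hε₀
  obtain ⟨hθ0, hθ1⟩ := hθ
  obtain ⟨hinf, ⟨F₀, hF₀⟩, Γ, hΓ0, hΓ⟩ := hA1
  obtain ⟨hF₀0, Λ₀, hΛ₀0, hF₀b⟩ := hF₀
  have hγ₁0 : (0:ℝ) < γ₁ := by linarith
  have hl1 : 1 ≤ l := le_trans one_le_two hl
  have hub : ∀ M : ℝ, ∃ n, 1 ≤ n ∧ M < h n := h_unbounded hξ hF₀0 hF₀b
  have hubT : ∀ M : ℝ, ∃ n, 1 ≤ n ∧ M < h n + τ n := by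
    intro M
    obtain ⟨n, hn1, hn⟩ := hub M
    exact ⟨n, hn1, lt_of_lt_of_le hn (le_add_of_nonneg_right (hξ.2.1 n hn1))⟩
  have hwinT : ∀ t : ℝ, h 1 + τ 1 ≤ t →
      ∃ n, 1 ≤ n ∧ h n + τ n ≤ t ∧ t < h (n + 1) + τ (n + 1) :=
    exists_window (fun n => h n + τ n) (fun m n hm hmn => T_lt hξ m n hm hmn) hubT
  have hwinh : ∀ t : ℝ, h 1 ≤ t → ∃ n, 1 ≤ n ∧ h n ≤ t ∧ t < h (n + 1) :=
    exists_window h (fun m n hm hmn => h_lt hξ m n hm hmn) hub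
  -- shorthand sequences
  set bd : ℕ → ℝ := fun i => xiMeas h τ (h i + τ i) / (h i + τ i) with hbddef
  set bf : ℕ → ℝ := fun i => (i : ℝ) / h i with hbfdef
  -- a duration-bound strictly below 1
  have h1dur : (1:ℝ) ∈ durBounds h τ :=
    ⟨zero_le_one, le_refl 1, 1, one_pos, fun t ht => by
      have := xiMeas_le_self h τ ht; linarith⟩
  obtain ⟨Bs, hBsD, hBs1⟩ := exists_lt_of_csInf_lt ⟨1, h1dur⟩ hinf
  obtain ⟨hBs0, -, κ, hκ0, hκ⟩ := hBsD
  -- pointwise facts about bd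
  have hbd0 : ∀ i, 2 ≤ i → 0 ≤ bd i := fun i hi =>
    div_nonneg (xiMeas_nonneg' h τ _) (T_pos hξ i hi).le
  have hbd1 : ∀ i, 2 ≤ i → bd i < 1 := by
    intro i hi
    have hT : 0 < h i + τ i := T_pos hξ i hi
    rw [hbddef]
    simp only
    rw [div_lt_one hT]
    obtain ⟨j, rfl⟩ : ∃ j, i = j + 1 := ⟨i - 1, by omega⟩
    have hj1 : 1 ≤ j := by omega
    have h1 : xiMeas h τ (h (j+1) + τ (j+1)) ≤ xiMeas h τ (h j + τ j) + τ (j+1) :=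
      xiMeas_window hξ j hj1 _ le_rfl
    have h2 : xiMeas h τ (h j + τ j) ≤ h j + τ j := xiMeas_le_self h τ (T_nonneg hξ j hj1)
    have h3 : h j + τ j < h (j+1) := hξ.2.2 j hj1
    linarith
  -- tail bound for bd
  obtain ⟨n₀, hn₀1, hn₀⟩ := hub (2 * κ / (1 - Bs))
  set I₁ := max l n₀ with hI₁def
  have hI₁l : l ≤ I₁ := le_max_left _ _
  have htail : ∀ i, I₁ ≤ i → bd i ≤ (1 + Bs) / 2 := by
    intro i hi
    have hi2 : 2 ≤ i := le_trans hl (le_trans hI₁l hi)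
    have hTpos : 0 < h i + τ i := T_pos hξ i hi2
    have hhn : h n₀ ≤ h i := h_le hξ n₀ i hn₀1 (le_trans (le_max_right l n₀) hi)
    have hTi : 2 * κ / (1 - Bs) < h i + τ i :=
      lt_of_lt_of_le hn₀ (le_trans hhn (le_add_of_nonneg_right (hξ.2.1 i (by omega))))
    have hBl : 0 < 1 - Bs := by linarith
    have h2κ : 2 * κ < (h i + τ i) * (1 - Bs) := by
      rw [div_lt_iff₀ hBl] at hTi
      linarith
    have hx : xiMeas h τ (h i + τ i) ≤ κ + Bs * (h i + τ i) := hκ _ (T_pos hξ i hi2).le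
    rw [hbddef]
    simp only
    rw [div_le_iff₀ hTpos]
    nlinarith
  -- the duration bound Sd
  have hIccne : (Finset.Icc l I₁).Nonempty := Finset.nonempty_Icc.mpr hI₁l
  set Md : ℝ := max ((Finset.Icc l I₁).sup' hIccne bd) ((1 + Bs) / 2) with hMddef
  have hMd1 : Md < 1 := by
    refine max_lt ?_ (by linarith)
    rw [Finset.sup'_lt_iff]
    intro i hi
    exact hbd1 i (le_trans hl (Finset.mem_Icc.mp hi).1)
  have hMd : ∀ i, l ≤ i → bd i ≤ Md := by
    intro i hi
    rcases le_or_gt i I₁ with hc | hc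
    · exact le_trans (Finset.le_sup' bd (Finset.mem_Icc.mpr ⟨hi, hc⟩)) (le_max_left _ _)
    · exact le_trans (htail i hc.le) (le_max_right _ _)
  have hbdne : (bd '' Set.Ici l).Nonempty := ⟨bd l, l, Set.self_mem_Ici, rfl⟩
  have hbdbdd : BddAbove (bd '' Set.Ici l) := by
    refine ⟨Md, ?_⟩
    rintro x ⟨i, hi, rfl⟩
    exact hMd i hi
  set Sd := sSup (bd '' Set.Ici l) with hSddef
  have hSd_ge : ∀ i, l ≤ i → bd i ≤ Sd := fun i hi => le_csSup hbdbdd ⟨i, Set.mem_Ici.mpr hi, rfl⟩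
  have hSd1 : Sd < 1 := by
    refine lt_of_le_of_lt (csSup_le hbdne ?_) hMd1
    rintro x ⟨i, hi, rfl⟩
    exact hMd i hi
  have hSd0 : 0 ≤ Sd := le_trans (hbd0 l hl) (hSd_ge l le_rfl)
  -- facts about bf
  have hhl_pos : 0 < h l := h_pos hξ l hl
  have hbfA : ∀ i : ℕ, 1 ≤ i → (i : ℝ) ≤ Λ₀ + F₀ * h i := by
    intro i hi
    have := hF₀b (h i) (h_nonneg hξ i hi)
    rwa [nXi_at hξ i hi] at this
  have hMf : ∀ i, l ≤ i → bf i ≤ Λ₀ / h l + F₀ := by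
    intro i hi
    have hpi : 0 < h i := lt_of_lt_of_le hhl_pos (h_le hξ l i hl1 hi)
    have hhli : h l ≤ h i := h_le hξ l i hl1 hi
    rw [hbfdef]
    simp only
    rw [div_le_iff₀ hpi]
    have h1 := hbfA i (le_trans hl1 hi)
    have e1 : Λ₀ / h l * h l = Λ₀ := div_mul_cancel₀ _ hhl_pos.ne'
    have e2 : Λ₀ / h l * h l ≤ Λ₀ / h l * h i :=
      mul_le_mul_of_nonneg_left hhli (div_nonneg hΛ₀0.le hhl_pos.le)
    nlinarith
  have hbfne : (bf '' Set.Ici l).Nonempty := ⟨bf l, l, Set.self_mem_Ici, rfl⟩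
  have hbfbdd : BddAbove (bf '' Set.Ici l) := by
    refine ⟨Λ₀ / h l + F₀, ?_⟩
    rintro x ⟨i, hi, rfl⟩
    exact hMf i hi
  set Sf := sSup (bf '' Set.Ici l) with hSfdef
  have hSf_ge : ∀ i, l ≤ i → bf i ≤ Sf := fun i hi => le_csSup hbfbdd ⟨i, Set.mem_Ici.mpr hi, rfl⟩
  have hbfl_pos : 0 < bf l := by
    rw [hbfdef]
    exact div_pos (by exact_mod_cast lt_of_lt_of_le two_pos hl) hhl_pos
  have hSf_pos : 0 < Sf := lt_of_lt_of_le hbfl_pos (hSf_ge l le_rfl)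
  -- Sd is a duration bound
  have hSdD : Sd ∈ durBounds h τ := by
    refine ⟨hSd0, hSd1.le, (h l + τ l) + Γ + 1, by
      have := T_nonneg hξ l hl1; linarith, ?_⟩
    intro t ht
    rcases le_or_gt t (h l + τ l) with hcase | hcase
    · have h1 := xiMeas_le_self h τ ht
      nlinarith [mul_nonneg hSd0 ht]
    · obtain ⟨n, hn1, hnle, hnlt⟩ := hwinT t
        (le_trans (T_le hξ 1 l le_rfl hl1) hcase.le)
      have hnl : l ≤ n := by
        by_contra hcon
        push_neg at hcon
        have := T_le hξ (n+1) l (by omega) (by omega)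
        linarith
      have hTn_pos : 0 < h n + τ n := T_pos hξ n (le_trans hl hnl)
      have h1 : xiMeas h τ t ≤ xiMeas h τ (h n + τ n) + τ (n+1) :=
        xiMeas_window hξ n hn1 t hnlt.le
      have h2 : xiMeas h τ (h n + τ n) = bd n * (h n + τ n) := by
        rw [hbddef]
        simp only
        rw [div_mul_cancel₀ _ hTn_pos.ne']
      have h3 : bd n ≤ Sd := hSd_ge n hnl
      have h4 : τ (n+1) ≤ Γ := hΓ (n+1) (by omega)
      have h5 : bd n * (h n + τ n) ≤ Sd * t := by
        calc bd n * (h n + τ n) ≤ Sd * (h n + τ n) :=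
              mul_le_mul_of_nonneg_right h3 hTn_pos.le
          _ ≤ Sd * t := mul_le_mul_of_nonneg_left hnle hSd0
      have h6 : 0 ≤ h l + τ l := T_nonneg hξ l hl1
      linarith
  -- Sf is a frequency bound
  have hSfF : Sf ∈ freqBounds h := by
    refine ⟨hSf_pos.le, (l : ℝ) + 1, by positivity, ?_⟩
    intro t ht
    rcases lt_or_ge t (h (l+1)) with hcase | hcase
    · have h1 : (nXi h t : ℝ) ≤ l := by exact_mod_cast nXi_le hξ l hl1 t hcase
      nlinarith [mul_nonneg hSf_pos.le ht]
    · obtain ⟨n, hn1, hnle, hnlt⟩ := hwinh t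
        (le_trans (h_le hξ 1 (l+1) le_rfl (by omega)) hcase)
      have hnl : l ≤ n := by
        by_contra hcon
        push_neg at hcon
        have := h_le hξ (n+1) (l+1) (by omega) (by omega)
        linarith
      have hpn : 0 < h n := h_pos hξ n (le_trans hl hnl)
      have h1 : (nXi h t : ℝ) ≤ n := by exact_mod_cast nXi_le hξ n hn1 t hnlt
      have h2 : bf n ≤ Sf := hSf_ge n hnl
      have e : (n : ℝ) = bf n * h n := by
        rw [hbfdef]
        simp only
        rw [div_mul_cancel₀ _ hpn.ne']
      have h3 : bf n * h n ≤ Sf * t := by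
        calc bf n * h n ≤ Sf * h n := mul_le_mul_of_nonneg_right h2 hpn.le
          _ ≤ Sf * t := mul_le_mul_of_nonneg_left hnle hSf_pos.le
      linarith
  -- estimator values
  have hDval : ∀ n, (hn : l ≤ n) → Bd (h n + τ n) =
      (Finset.Icc l n).sup' (Finset.nonempty_Icc.mpr hn)
        (fun i => max ε₀ (θ * bd i + (1 - θ))) := by
    intro n hn
    exact hBd.2 n hn _ le_rfl (T_lt hξ n (n+1) (le_trans hl1 hn) (by omega))
  have hFval : ∀ n, (hn : l ≤ n) → Bf (h n) =
      (Finset.Icc l n).sup' (Finset.nonempty_Icc.mpr hn)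
        (fun i => max ε₀ (bf i / θ)) := by
    intro n hn
    exact hBf.2 n hn _ le_rfl (h_lt hξ n (n+1) (le_trans hl1 hn) (by omega))
  have hDsmall : ∀ n, 1 ≤ n → n < l → Bd (h n + τ n) = ε₀ := fun n h1 h2 =>
    hBd.1 _ (T_nonneg hξ n h1) (T_lt hξ n l h1 h2)
  have hFsmall : ∀ n, 1 ≤ n → n < l → Bf (h n) = ε₀ := fun n h1 h2 =>
    hBf.1 _ (h_nonneg hξ n h1) (h_lt hξ n l h1 h2)
  set Dplus : ℝ := max ε₀ (θ * Sd + (1 - θ)) with hDplusdef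
  set Fplus : ℝ := max ε₀ (Sf / θ) with hFplusdef
  have hDplus1 : Dplus < 1 := max_lt hε₀1 (by nlinarith)
  have hFplus0 : 0 < Fplus := lt_of_lt_of_le hε₀0 (le_max_left _ _)
  have hDn_le : ∀ n, l ≤ n → Bd (h n + τ n) ≤ Dplus := by
    intro n hn
    rw [hDval n hn]
    refine Finset.sup'_le _ _ ?_
    intro i hi
    have := hSd_ge i (Finset.mem_Icc.mp hi).1
    exact max_le_max le_rfl (by nlinarith)
  have hFn_le : ∀ n, l ≤ n → Bf (h n) ≤ Fplus := by
    intro n hn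
    rw [hFval n hn]
    refine Finset.sup'_le _ _ ?_
    intro i hi
    have h1 := hSf_ge i (Finset.mem_Icc.mp hi).1
    refine max_le_max le_rfl ?_
    exact (div_le_div_iff_of_pos_right hθ0).mpr h1
  have hDn_ge : ∀ n, l ≤ n → ∀ i, l ≤ i → i ≤ n → θ * bd i + (1 - θ) ≤ Bd (h n + τ n) := by
    intro n hn i hi hin
    rw [hDval n hn]
    exact le_trans (le_max_right ε₀ _)
      (Finset.le_sup' (fun i => max ε₀ (θ * bd i + (1 - θ))) (Finset.mem_Icc.mpr ⟨hi, hin⟩))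
  have hFn_ge : ∀ n, l ≤ n → ∀ i, l ≤ i → i ≤ n → bf i / θ ≤ Bf (h n) := by
    intro n hn i hi hin
    rw [hFval n hn]
    exact le_trans (le_max_right ε₀ _)
      (Finset.le_sup' (fun i => max ε₀ (bf i / θ)) (Finset.mem_Icc.mpr ⟨hi, hin⟩))
  have hFn_geε : ∀ n, l ≤ n → ε₀ ≤ Bf (h n) := by
    intro n hn
    rw [hFval n hn]
    exact le_trans (le_max_left ε₀ _)
      (Finset.le_sup' (fun i => max ε₀ (bf i / θ)) (Finset.mem_Icc.mpr ⟨le_rfl, hn⟩))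
  have hD_mono : ∀ m n, l ≤ m → m ≤ n → Bd (h m + τ m) ≤ Bd (h n + τ n) := by
    intro m n hm hmn
    rw [hDval m hm, hDval n (le_trans hm hmn)]
    exact Finset.sup'_mono _ (Finset.Icc_subset_Icc_right hmn) _
  have hF_mono : ∀ m n, l ≤ m → m ≤ n → Bf (h m) ≤ Bf (h n) := by
    intro m n hm hmn
    rw [hFval m hm, hFval n (le_trans hm hmn)]
    exact Finset.sup'_mono _ (Finset.Icc_subset_Icc_right hmn) _
  -- the lower bound Δlow
  set c₁ : ℝ := (1 - ε₀) / (γ₁ * ε₀) with hc₁def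
  set c₂ : ℝ := (1 - Dplus) / (γ₁ * Fplus) with hc₂def
  have hc₁ : 0 < c₁ := div_pos (by linarith) (by positivity)
  have hc₂ : 0 < c₂ := div_pos (by linarith) (by positivity)
  set Δlow := min Δ₀ (min c₁ c₂) with hΔlowdef
  have hΔlow : 0 < Δlow := lt_min hΔ₀ (lt_min hc₁ hc₂)
  have hstep : ∀ k, 1 ≤ k → 0 ≤ tk k → Δlow ≤ Δ k ∧ Δ k ≤ Δ₀ := by
    intro k hk htk
    rcases lt_or_ge (tk k) (h 1 + τ 1) with hc | hc
    · rw [hinit k hk htk hc]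
      exact ⟨min_le_left _ _, le_rfl⟩
    · obtain ⟨n, hn1, hA, hB⟩ := hwinT (tk k) hc
      rw [hupd k hk n hn1 hA hB]
      refine ⟨?_, min_le_left _ _⟩
      rcases lt_or_ge n l with hnl | hnl
      · rw [hDsmall n hn1 hnl, hFsmall n hn1 hnl]
        exact le_min (min_le_left _ _)
          (le_trans (min_le_right _ _) (min_le_left _ _))
      · refine le_min (min_le_left _ _)
          (le_trans (le_trans (min_le_right _ _) (min_le_right _ _)) ?_)
        have h1 := hDn_le n hnl
        have h2 := hFn_le n hnl
        have h3 := hFn_geε n hnl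
        rw [hc₂def]
        refine div_le_div₀ (by linarith) (by linarith) (by nlinarith) ?_
        exact mul_le_mul_of_nonneg_left h2 hγ₁0.le
  have htk0 : ∀ k, 1 ≤ k → 0 ≤ tk k := by
    intro k hk
    induction k, hk using Nat.le_induction with
    | base => rw [ht1]
    | succ n hn ih =>
      rw [hrec n hn]
      have := hstep n hn ih
      linarith
  -- the eventual bound
  have ha : 0 < 1 - Sd := sub_pos.mpr hSd1
  have hqpos : 0 < θ ^ 2 / γ₁ := div_pos (pow_pos hθ0 2) hγ₁0
  set r := Real.sqrt (θ ^ 2 / γ₁) with hrdef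
  have hrpos : 0 < r := Real.sqrt_pos.mpr hqpos
  have hr2 : r ^ 2 = θ ^ 2 / γ₁ := Real.sq_sqrt hqpos.le
  have hq1 : θ ^ 2 / γ₁ < 1 := (div_lt_one hγ₁0).mpr (by nlinarith only [hθ0, hθ1, hγ₁])
  have hrlt1 : r < 1 := by
    by_contra hcon
    push_neg at hcon
    nlinarith only [hr2, hq1, hcon, sq_nonneg (r - 1)]
  -- pick near-optimal indices
  obtain ⟨x, hx, hxlt⟩ := exists_lt_of_lt_csSup hbdne
    (show Sd - (1 - Sd) * (1 - r) / r < Sd by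
      have h0 : 0 < (1 - Sd) * (1 - r) / r :=
        div_pos (mul_pos ha (by linarith only [hrlt1])) hrpos
      linarith only [h0])
  obtain ⟨i, hil, rfl⟩ := hx
  rw [Set.mem_Ici] at hil
  have hbdi : 1 - bd i < (1 - Sd) / r := by
    have e : (1 - Sd) + (1 - Sd) * (1 - r) / r = (1 - Sd) / r := by
      field_simp
      ring
    linarith only [hxlt, e]
  obtain ⟨y, hy, hylt⟩ := exists_lt_of_lt_csSup hbfne
    (show Sf - Sf * (1 - r) < Sf by
      have h0 : 0 < Sf * (1 - r) := mul_pos hSf_pos (by linarith only [hrlt1])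
      linarith only [h0])
  obtain ⟨j, hjl, rfl⟩ := hy
  rw [Set.mem_Ici] at hjl
  have hbfj : Sf * r < bf j := by
    have e : Sf - Sf * (1 - r) = Sf * r := by ring
    linarith only [hylt, e]
  set I := max i j with hIdef
  have hIl : l ≤ I := le_trans hil (le_max_left _ _)
  have hI1 : 1 ≤ I := le_trans hl1 hIl
  have hFIpos : 0 < Bf (h I) := lt_of_lt_of_le hε₀0 (hFn_geε I hIl)
  have hDIlt1 : Bd (h I + τ I) < 1 := lt_of_le_of_lt (hDn_le I hIl) hDplus1
  set c0 : ℝ := (1 - Bd (h I + τ I)) / (γ₁ * Bf (h I)) with hc0def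
  have hc0pos : 0 < c0 :=
    div_pos (by linarith only [hDIlt1]) (mul_pos hγ₁0 hFIpos)
  have hbdile : bd i ≤ Sd := hSd_ge i hil
  have hbfjpos : 0 < bf j := lt_of_le_of_lt (mul_nonneg hSf_pos.le hrpos.le) hbfj
  have hc0lt : c0 < (1 - Sd) / Sf := by
    have h1 : 1 - Bd (h I + τ I) ≤ θ * (1 - bd i) := by
      have h2 := hDn_ge I hIl i hil (le_max_left _ _)
      linarith only [h2]
    have h2 : γ₁ * (bf j / θ) ≤ γ₁ * Bf (h I) :=
      mul_le_mul_of_nonneg_left (hFn_ge I hIl j hjl (le_max_right _ _)) hγ₁0.le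
    have hd2 : 0 < γ₁ * (bf j / θ) := mul_pos hγ₁0 (div_pos hbfjpos hθ0)
    have stepA : c0 ≤ θ * (1 - bd i) / (γ₁ * (bf j / θ)) :=
      div_le_div₀ (mul_nonneg hθ0.le (by linarith only [hbdile, hSd1])) h1 hd2 h2
    have stepB : θ * (1 - bd i) / (γ₁ * (bf j / θ)) < (1 - Sd) / Sf := by
      have e : θ * (1 - bd i) / (γ₁ * (bf j / θ)) = θ ^ 2 * (1 - bd i) / (γ₁ * bf j) := by
        rw [div_eq_div_iff hd2.ne' (mul_pos hγ₁0 hbfjpos).ne']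
        field_simp
      rw [e, div_lt_div_iff₀ (mul_pos hγ₁0 hbfjpos) hSf_pos]
      have f1 : (1 - bd i) * r < 1 - Sd := by
        rw [lt_div_iff₀ hrpos] at hbdi
        linarith only [hbdi]
      have f3 : θ ^ 2 = γ₁ * r ^ 2 := by
        rw [hr2]
        field_simp
      calc θ ^ 2 * (1 - bd i) * Sf = γ₁ * ((1 - bd i) * r) * (Sf * r) := by
            rw [f3]; ring
        _ < γ₁ * (1 - Sd) * (Sf * r) :=
            mul_lt_mul_of_pos_right (mul_lt_mul_of_pos_left f1 hγ₁0)
              (mul_pos hSf_pos hrpos)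
        _ ≤ γ₁ * (1 - Sd) * bf j :=
            mul_le_mul_of_nonneg_left hbfj.le (mul_nonneg hγ₁0.le ha.le)
        _ = (1 - Sd) * (γ₁ * bf j) := by ring
    exact lt_of_le_of_lt stepA stepB
  set Δbar := min Δ₀ ((c0 + (1 - Sd) / Sf) / 2) with hΔbardef
  have havg : 0 < (c0 + (1 - Sd) / Sf) / 2 := by
    have h0 := div_pos ha hSf_pos
    linarith only [hc0pos, h0]
  have hΔbar0 : 0 < Δbar := lt_min hΔ₀ havg
  -- final inequality
  have hfin : Sd + Sf * Δbar < 1 := by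
    have h1 : Δbar ≤ (c0 + (1 - Sd) / Sf) / 2 := min_le_right _ _
    have h2 : (c0 + (1 - Sd) / Sf) / 2 < (1 - Sd) / Sf := by linarith only [hc0lt]
    have h3 : Δbar < (1 - Sd) / Sf := lt_of_le_of_lt h1 h2
    have h4 : Sf * Δbar < Sf * ((1 - Sd) / Sf) := mul_lt_mul_of_pos_left h3 hSf_pos
    have e : Sf * ((1 - Sd) / Sf) = 1 - Sd := mul_div_cancel₀ _ hSf_pos.ne'
    linarith only [h4, e]
  refine ⟨Δlow, hΔlow, h I + τ I, T_nonneg hξ I hI1, Δbar, hΔbar0, min_le_left _ _,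
    Sd, hSdD, Sf, hSfF, fun k hk => hstep k hk (htk0 k hk), ?_, hfin⟩
  intro k hk htc
  have hge1 : h 1 + τ 1 ≤ tk k := le_trans (T_le hξ 1 I le_rfl hI1) htc
  obtain ⟨n, hn1, hA, hB⟩ := hwinT (tk k) hge1
  have hnI : I ≤ n := by
    by_contra hcon
    push_neg at hcon
    have h5 := T_le hξ (n+1) I (by omega) (by omega)
    linarith only [h5, htc, hB]
  have hnl : l ≤ n := le_trans hIl hnI
  rw [hupd k hk n hn1 hA hB]
  have hmonoD : Bd (h I + τ I) ≤ Bd (h n + τ n) := hD_mono I n hIl hnI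
  have hmonoF : Bf (h I) ≤ Bf (h n) := hF_mono I n hIl hnI
  have hFnpos : 0 < Bf (h n) := lt_of_lt_of_le hε₀0 (hFn_geε n hnl)
  have hDn1 : Bd (h n + τ n) ≤ Dplus := hDn_le n hnl
  have hstep2 : (1 - Bd (h n + τ n)) / (γ₁ * Bf (h n)) ≤ c0 := by
    rw [hc0def]
    refine div_le_div₀ (by linarith only [hDIlt1]) (by linarith only [hmonoD])
      (mul_pos hγ₁0 hFIpos) (mul_le_mul_of_nonneg_left hmonoF hγ₁0.le)
  calc min Δ₀ ((1 - Bd (h n + τ n)) / (γ₁ * Bf (h n)))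
      ≤ min Δ₀ ((c0 + (1 - Sd) / Sf) / 2) :=
        min_le_min le_rfl (le_trans hstep2 (by linarith only [hc0lt]))
    _ = Δbar := by rw [hΔbardef]
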